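/- arXiv:1906.10523 — 6 statements merged into one kernel-verified Lean document; each statement's English description precedes it below -/
import Mathlib

section
/- Let G be an undirected graph, l ≥ 2, v a vertex of G, and X a v-hitting set (a set of vertices in the connected component of v, not containing v, that intersects every path on l vertices passing through v). Then there exists a minimum-size l-path vertex cover S of G such that either v ∉ S or |X \ S| ≥ 2. -/
/-! If a minimum cover `S` contains `v` but misses at most one vertex of `X`, then
`S.erase v ∪ X` is again a cover, since every path avoiding it must pass through `v` and so
meets `X`; it is no larger than `S` and avoids `v`. -/

variable {V : Type*} [Fintype V] [DecidableEq V]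

/-- `L` is the list of vertices of a path in `G` (consecutive vertices adjacent, no repeats). -/
def IsPathL (G : SimpleGraph V) (L : List V) : Prop :=
  L.Chain' G.Adj ∧ L.Nodup

/-- `L` is an `l`-path in `G`: a path on exactly `l` vertices. -/
def IsLPathL (G : SimpleGraph V) (l : ℕ) (L : List V) : Prop :=
  IsPathL G L ∧ L.length = l

/-- `L` is a `v`-path: an `l`-path containing the vertex `v`. -/
def IsVPathL (G : SimpleGraph V) (l : ℕ) (v : V) (L : List V) : Prop :=
  IsLPathL G l L ∧ v ∈ L

/-- `S` is an `l`-path vertex cover of `G`: `G - S` contains no `l`-path. -/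
def IsLPVC (G : SimpleGraph V) (l : ℕ) (S : Finset V) : Prop :=
  ¬ ∃ L, IsLPathL G l L ∧ ∀ x ∈ L, x ∉ S

/-- `X` is a `v`-hitting set: a set of vertices of the connected component of `v`,
not containing `v`, intersecting every `v`-path. -/
def IsVHit (G : SimpleGraph V) (l : ℕ) (v : V) (X : Finset V) : Prop :=
  v ∉ X ∧ (∀ x ∈ X, G.Reachable v x) ∧
    ∀ L, IsVPathL G l v L → ∃ x ∈ X, x ∈ L

/-- `u` is reachable from `w` by a walk avoiding the set `S`
(i.e. `u` is in the connected component of `w` in `G - S`). -/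
def ReachAvoid (G : SimpleGraph V) (S : Set V) (w u : V) : Prop :=
  ∃ q : G.Walk w u, ∀ x ∈ q.support, x ∉ S

/-- Two `v`-paths are intersecting if they have different vertex sets and share
a vertex other than `v`. -/
def IntersectingVP (v : V) (L L' : List V) : Prop :=
  L.toFinset ≠ L'.toFinset ∧ ∃ u, u ≠ v ∧ u ∈ L ∧ u ∈ L'

open Finset

omit [Fintype V] in
theorem card_erase_union_add_one {S X : Finset V} {v : V} (hvS : v ∈ S) (hvX : v ∉ X) :
    (S.erase v ∪ X).card + 1 = S.card + (X \ S).card := by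
  have hdiff : X \ S.erase v = X \ S := by
    ext x
    by_cases hx : x = v
    · subst hx; simp [hvX]
    · simp [hx]
  rw [union_comm, ← card_sdiff_add_card, hdiff, ← card_erase_add_one hvS]
  omega

section LPVC

variable {G : SimpleGraph V} {l : ℕ}

omit [DecidableEq V] in
theorem isLPVC_univ (hl : l ≠ 0) : IsLPVC G l univ := by
  rintro ⟨L, ⟨-, hlen⟩, havoid⟩
  obtain ⟨x, hx⟩ := List.exists_mem_of_length_pos (by omega : 0 < L.length)
  exact havoid x hx (mem_univ x)

omit [DecidableEq V] in
theorem exists_isLPVC_card_min (hl : l ≠ 0) :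
    ∃ S : Finset V, IsLPVC G l S ∧ ∀ T : Finset V, IsLPVC G l T → S.card ≤ T.card := by
  classical
  obtain ⟨S, hS, hmin⟩ :=
    (univ.filter (IsLPVC G l)).exists_min_image card ⟨univ, by simpa using isLPVC_univ hl⟩
  exact ⟨S, (mem_filter.1 hS).2, fun T hT => hmin T (by simpa using hT)⟩

omit [Fintype V] in
theorem IsLPVC.erase_union {S : Finset V} (hS : IsLPVC G l S) {v : V} (X : Finset V)
    (hX : ∀ L, IsVPathL G l v L → ∃ x ∈ X, x ∈ L) : IsLPVC G l (S.erase v ∪ X) := by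
  rintro ⟨L, hL, havoid⟩
  refine hS ⟨L, hL, fun x hxL hxS => ?_⟩
  by_cases hxv : x = v
  · subst hxv
    obtain ⟨y, hyX, hyL⟩ := hX L ⟨hL, hxL⟩
    exact havoid y hyL (mem_union_right _ hyX)
  · exact havoid x hxL (mem_union_left _ (mem_erase.2 ⟨hxv, hxS⟩))

end LPVC

theorem stmt_0 (G : SimpleGraph V) (l : ℕ) (v : V) (X : Finset V)
    (hl : 2 ≤ l) (hX : IsVHit G l v X) :
    ∃ S : Finset V, IsLPVC G l S ∧ (∀ T : Finset V, IsLPVC G l T → S.card ≤ T.card) ∧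
      (v ∉ S ∨ 2 ≤ (X \ S).card) := by
  obtain ⟨hvX, -, hhit⟩ := hX
  obtain ⟨S, hS, hmin⟩ := exists_isLPVC_card_min (G := G) (by omega : l ≠ 0)
  by_cases hswap : v ∈ S ∧ (X \ S).card ≤ 1
  · obtain ⟨hvS, hXS⟩ := hswap
    have hcard := card_erase_union_add_one hvS hvX
    refine ⟨S.erase v ∪ X, hS.erase_union X hhit, fun T hT => ?_, Or.inl ?_⟩
    · have := hmin T hT
      omega
    · simp [hvX]
  · exact ⟨S, hS, hmin, by by_contra! h; exact hswap ⟨h.1, by omega⟩⟩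
end

section
/- Let G be a graph, v a vertex, and suppose β(G,v) = 2 with v-hitting set X = {w_1, w_2}. Suppose no vertex u of G satisfies that G_u − u contains no l-path (i.e., reduction rule R4 is not applicable), and the connected components C_1, C_2 of G_v − v containing w_1 and w_2 respectively induce subgraphs containing no l-path. Then there is exactly one connected component C_0 of G_v − v whose induced subgraph contains an l-path. -/
variable {V : Type*} [Fintype V] [DecidableEq V]

/-! By R4 at `v`, some component of `G - v` inside `G_v` contains an `l`-path. If another one did
too, each of the two would contain a path starting at a neighbour of `v` with at least
`(l + 1) / 2` vertices: walk from `v` to the `l`-path and continue along its longer half. Glued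
at `v`, these give a `v`-path on `l` vertices, so the hitting set has a vertex in one of the two
components; but the components of `w₁` and `w₂` contain no `l`-path. -/

section

variable {α : Type*} {G : SimpleGraph α}

namespace ReachAvoid

variable {S : Set α} {a b c : α}

lemma refl (ha : a ∉ S) : ReachAvoid G S a a :=
  ⟨.nil, by simpa using ha⟩

lemma symm : ReachAvoid G S a b → ReachAvoid G S b a := fun ⟨q, hq⟩ =>
  ⟨q.reverse, by simpa using hq⟩

lemma trans : ReachAvoid G S a b → ReachAvoid G S b c → ReachAvoid G S a c :=
  fun ⟨q, hq⟩ ⟨r, hr⟩ => ⟨q.append r, fun x hx =>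
    ((SimpleGraph.Walk.mem_support_append_iff q r).1 hx).elim (hq x) (hr x)⟩

lemma right_notMem : ReachAvoid G S a b → b ∉ S := fun ⟨q, hq⟩ =>
  hq b q.end_mem_support

lemma reachable : ReachAvoid G S a b → G.Reachable a b := fun ⟨q, _⟩ => ⟨q⟩

lemma of_isChain_cons : ∀ {a : α} {L : List α}, (a :: L).IsChain G.Adj → (∀ x ∈ a :: L, x ∉ S) →
    ∀ x ∈ a :: L, ReachAvoid G S a x
  | a, [], _, hS, x, hx => by
    rw [List.mem_singleton.1 hx]
    exact refl (hS a (by simp))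
  | a, b :: L, hc, hS, x, hx => by
    rcases List.mem_cons.1 hx with rfl | hx
    · exact refl (hS x (by simp))
    · have hab : ReachAvoid G S a b :=
        ⟨.cons (List.isChain_cons_cons.1 hc).1 .nil, fun y hy => hS y (by simp at hy ⊢; tauto)⟩
      exact hab.trans (of_isChain_cons (List.isChain_cons_cons.1 hc).2
        (fun y hy => hS y (List.mem_cons_of_mem _ hy)) x hx)

lemma of_isChain {L : List α} (hL : L.IsChain G.Adj) (hS : ∀ x ∈ L, x ∉ S) {x y : α}
    (hx : x ∈ L) (hy : y ∈ L) : ReachAvoid G S x y := by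
  cases L with
  | nil => simp at hx
  | cons a L => exact (of_isChain_cons hL hS x hx).symm.trans (of_isChain_cons hL hS y hy)

end ReachAvoid

namespace IsPathL

variable {L L' A B : List α} {m : α}

lemma of_isInfix (h : IsPathL G L) (h' : L' <:+: L) : IsPathL G L' :=
  ⟨List.IsChain.infix h.1 h', h.2.sublist h'.sublist⟩

lemma reverse (h : IsPathL G L) : IsPathL G L.reverse :=
  ⟨List.isChain_reverse.2 (List.IsChain.imp (fun _ _ (hab : G.Adj _ _) => hab.symm) h.1),
    List.nodup_reverse.2 h.2⟩

lemma append_cons (hA : IsPathL G (A ++ [m])) (hB : IsPathL G (m :: B))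
    (hAB : ∀ x ∈ A, x ∉ m :: B) : IsPathL G (A ++ m :: B) := by
  refine ⟨?_, List.nodup_append.2 ⟨hA.2.sublist (List.sublist_append_left _ _), hB.2, ?_⟩⟩
  · exact (by simpa using List.IsChain.append_overlap (l₂ := [m]) hA.1 hB.1 (by simp) :
      List.IsChain G.Adj (A ++ m :: B))
  · rintro x hx y hy rfl
    exact hAB x hx hy

lemma exists_long_half (h : IsPathL G (A ++ m :: B)) :
    ∃ H, IsPathL G (m :: H) ∧ (∀ x ∈ H, x ∈ A ++ m :: B) ∧
      (A ++ m :: B).length + 1 ≤ 2 * (m :: H).length := by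
  rcases le_total A.length B.length with hAB | hBA
  · exact ⟨B, h.of_isInfix ⟨A, [], by simp⟩, fun x hx => by simp [hx], by simp; omega⟩
  · refine ⟨A.reverse, ?_, fun x hx => by simp_all, by simp; omega⟩
    simpa using (h.of_isInfix ⟨[], B, by simp⟩ : IsPathL G (A ++ [m])).reverse

end IsPathL

lemma exists_isPathL_to_first_mem {s : Set α} {v u : α} (hvu : G.Reachable v u) (hu : u ∈ s)
    (hv : v ∉ s) : ∃ Q m, IsPathL G (v :: Q ++ [m]) ∧ m ∈ s ∧ ∀ x ∈ Q, x ∉ s := by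
  classical
  obtain ⟨p, hp⟩ := hvu.exists_isPath
  obtain ⟨m, hm⟩ : ∃ m, p.support.find? (· ∈ s) = some m :=
    Option.isSome_iff_exists.1 (List.find?_isSome.2 ⟨u, p.end_mem_support, by simpa using hu⟩)
  obtain ⟨hms, A, B, hAB, hA⟩ := List.find?_eq_some_iff_append.1 hm
  have hsupp : A ++ m :: B = v :: p.support.tail := hAB ▸ p.cons_tail_support.symm
  cases A with
  | nil =>
    obtain rfl : m = v := (List.cons_eq_cons.1 hsupp).1
    simp_all
  | cons a Q =>
    obtain ⟨rfl, -⟩ := List.cons_eq_cons.1 hsupp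
    have hpath : IsPathL G (a :: Q ++ m :: B) := hAB ▸ ⟨p.isChain_adj_support, hp.support_nodup⟩
    exact ⟨Q, m, hpath.of_isInfix ⟨[], B, by simp⟩, by simpa using hms,
      fun x hx => by simpa using hA x (List.mem_cons_of_mem a hx)⟩

variable {l : ℕ} {v : α}

def ComponentHasLPath (G : SimpleGraph α) (l : ℕ) (S : Set α) (w : α) : Prop :=
  ∃ M, IsLPathL G l M ∧ ∀ x ∈ M, ReachAvoid G S w x

lemma ComponentHasLPath.of_reachAvoid {S : Set α} {w w' : α} (hww' : ReachAvoid G S w w')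
    (h : ComponentHasLPath G l S w') : ComponentHasLPath G l S w :=
  let ⟨M, hM, hMw'⟩ := h
  ⟨M, hM, fun x hx => hww'.trans (hMw' x hx)⟩

lemma ComponentHasLPath.exists_isPathL_cons {w : α} (hl : 1 ≤ l) (hvw : G.Reachable v w)
    (h : ComponentHasLPath G l {v} w) :
    ∃ S, IsPathL G (v :: S) ∧ l + 1 ≤ 2 * S.length ∧ ∀ x ∈ S, ReachAvoid G {v} w x := by
  obtain ⟨M, ⟨hM, rfl⟩, hMw⟩ := h
  obtain ⟨u, hu⟩ := List.exists_mem_of_length_pos hl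
  have hvM : v ∉ M := fun hv => (hMw v hv).right_notMem rfl
  obtain ⟨Q, m, hQm, hm, hQ⟩ := exists_isPathL_to_first_mem (s := {x | x ∈ M})
    (hvw.trans (hMw u hu).reachable) hu hvM
  have hmw := hMw m hm
  obtain ⟨A, B, rfl⟩ := List.append_of_mem hm
  obtain ⟨H, hH, hHM, hlen⟩ := hM.exists_long_half
  have hQH : ∀ x ∈ v :: Q, x ∉ m :: H := by
    rintro x hx hxH
    have hxM : x ∈ A ++ m :: B := by
      rcases List.mem_cons.1 hxH with rfl | hxH
      · simp
      · exact hHM x hxH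
    rcases List.mem_cons.1 hx with rfl | hx
    · exact hvM hxM
    · exact hQ x hx hxM
  have hS : IsPathL G (v :: (Q ++ m :: H)) := by simpa using hQm.append_cons hH hQH
  refine ⟨Q ++ m :: H, hS, by simp at hlen ⊢; omega, fun x hx => hmw.trans ?_⟩
  have hvS : ∀ y ∈ Q ++ m :: H, y ∉ ({v} : Set α) := fun y hy (hyv : y = v) =>
    (List.nodup_cons.1 hS.2).1 (hyv ▸ hy)
  exact ReachAvoid.of_isChain hS.1.tail hvS (by simp) hx

lemma exists_isVPathL_of_isPathL_cons {S T : List α} (hS : IsPathL G (v :: S))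
    (hT : IsPathL G (v :: T)) (hST : ∀ x ∈ S, x ∉ T) (hl : 1 ≤ l)
    (hlen : l ≤ S.length + T.length + 1) :
    ∃ L, IsVPathL G l v L ∧ ∀ x ∈ L, x = v ∨ x ∈ S ∨ x ∈ T := by
  set a := min S.length (l - 1)
  have hS' : IsPathL G (v :: S.take a) := by
    simpa using hS.of_isInfix (List.take_prefix (a + 1) _).isInfix
  have hT' : IsPathL G (v :: T.take (l - 1 - a)) := by
    simpa using hT.of_isInfix (List.take_prefix (l - 1 - a + 1) _).isInfix
  have hL := IsPathL.append_cons (by simpa using hS'.reverse) hT' fun x hx hxT => by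
    have hxS : x ∈ S := List.mem_of_mem_take (List.mem_reverse.1 hx)
    rcases List.mem_cons.1 hxT with rfl | hxT
    · exact (List.nodup_cons.1 hS.2).1 hxS
    · exact hST x hxS (List.mem_of_mem_take hxT)
  refine ⟨_, ⟨⟨hL, by simp; omega⟩, by simp⟩, fun x hx => ?_⟩
  simp only [List.mem_append, List.mem_reverse, List.mem_cons] at hx
  rcases hx with hx | rfl | hx
  · exact Or.inr (Or.inl (List.mem_of_mem_take hx))
  · exact Or.inl rfl
  · exact Or.inr (Or.inr (List.mem_of_mem_take hx))

theorem reachAvoid_of_isVHit {X : Finset α} {w w' : α} (hl : 1 ≤ l) (hX : IsVHit G l v X)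
    (hXfree : ∀ x ∈ X, ¬ ComponentHasLPath G l {v} x)
    (hvw : G.Reachable v w) (hw : ComponentHasLPath G l {v} w)
    (hvw' : G.Reachable v w') (hw' : ComponentHasLPath G l {v} w') :
    ReachAvoid G {v} w w' := by
  by_contra hww'
  obtain ⟨S, hS, hSlen, hSw⟩ := hw.exists_isPathL_cons hl hvw
  obtain ⟨T, hT, hTlen, hTw'⟩ := hw'.exists_isPathL_cons hl hvw'
  have hST : ∀ x ∈ S, x ∉ T := fun x hxS hxT => hww' ((hSw x hxS).trans (hTw' x hxT).symm)
  obtain ⟨L, hL, hLST⟩ := exists_isVPathL_of_isPathL_cons hS hT hST hl (by omega)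
  obtain ⟨x, hxX, hxL⟩ := hX.2.2 L hL
  rcases hLST x hxL with rfl | hxS | hxT
  · exact hX.1 hxX
  · exact hXfree x hxX (hw.of_reachAvoid (hSw x hxS).symm)
  · exact hXfree x hxX (hw'.of_reachAvoid (hTw' x hxT).symm)

end

theorem stmt_7_general (G : SimpleGraph V) (l : ℕ) (v w₁ w₂ : V)
    (hl : 2 ≤ l)
    (hXhit : IsVHit G l v {w₁, w₂})
    (hR4 : ∀ u : V, ∃ M : List V, IsLPathL G l M ∧
      ∀ x ∈ M, G.Reachable u x ∧ x ≠ u)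
    (hC1 : ¬ ∃ M : List V, IsLPathL G l M ∧ ∀ x ∈ M, ReachAvoid G {v} w₁ x)
    (hC2 : ¬ ∃ M : List V, IsLPathL G l M ∧ ∀ x ∈ M, ReachAvoid G {v} w₂ x) :
    ∃ w : V, (G.Reachable v w ∧ w ≠ v ∧
        (∃ M : List V, IsLPathL G l M ∧ ∀ x ∈ M, ReachAvoid G {v} w x)) ∧
      ∀ w' : V, (G.Reachable v w' ∧ w' ≠ v ∧
        (∃ M : List V, IsLPathL G l M ∧ ∀ x ∈ M, ReachAvoid G {v} w' x)) →
          ReachAvoid G {v} w w' := by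
  obtain ⟨M, hM, hMv⟩ := hR4 v
  obtain ⟨w, hwM⟩ := List.exists_mem_of_length_pos (by rw [hM.2]; omega)
  have hw : ComponentHasLPath G l {v} w :=
    ⟨M, hM, fun x hx => ReachAvoid.of_isChain hM.1.1 (fun y hy => (hMv y hy).2) hwM hx⟩
  have hXfree : ∀ x ∈ ({w₁, w₂} : Finset V), ¬ ComponentHasLPath G l {v} x := by
    simpa using ⟨hC1, hC2⟩
  exact ⟨w, ⟨(hMv w hwM).1, (hMv w hwM).2, hw⟩, fun w' ⟨hvw', _, hw'⟩ =>
    reachAvoid_of_isVHit (by omega) hXhit hXfree (hMv w hwM).1 hw hvw' hw'⟩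

theorem stmt_7 (G : SimpleGraph V) (l : ℕ) (v w₁ w₂ : V)
    (hl : 2 ≤ l) (hw : w₁ ≠ w₂)
    (hXhit : IsVHit G l v {w₁, w₂})
    (hβ2 : ∀ Y : Finset V, IsVHit G l v Y → 2 ≤ Y.card)
    (hR4 : ∀ u : V, ∃ M : List V, IsLPathL G l M ∧
      ∀ x ∈ M, G.Reachable u x ∧ x ≠ u)
    (hC1 : ¬ ∃ M : List V, IsLPathL G l M ∧ ∀ x ∈ M, ReachAvoid G {v} w₁ x)
    (hC2 : ¬ ∃ M : List V, IsLPathL G l M ∧ ∀ x ∈ M, ReachAvoid G {v} w₂ x) :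
    ∃ w : V, (G.Reachable v w ∧ w ≠ v ∧
        (∃ M : List V, IsLPathL G l M ∧ ∀ x ∈ M, ReachAvoid G {v} w x)) ∧
      ∀ w' : V, (G.Reachable v w' ∧ w' ≠ v ∧
        (∃ M : List V, IsLPathL G l M ∧ ∀ x ∈ M, ReachAvoid G {v} w' x)) →
          ReachAvoid G {v} w w' :=
  stmt_7_general G l v w₁ w₂ hl hXhit hR4 hC1 hC2
end

section
/- Among the branching vectors V_s = (1,…,1, 2,…,2), where the value 1 appears s times and the value 2 appears (l−1−s)^2 times, for 1 ≤ s ≤ l−2 and fixed l ≥ 3, the vector V_1 has the largest branching number. -/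
/-!
Clearing denominators, the branching number of a vector with `p` entries `1` and `q` entries `2`
is the positive root of `t ^ 2 = p * t + q`, and for `q ≥ 0` a point `z > 0` lies below that root
exactly when `z ^ 2 ≤ p * z + q`. Write `A = l - 1 - s` and `K = l - 2 = A + s - 1`. The root `x`
of `t ^ 2 = s * t + A ^ 2` is at most `A + K`, hence
`x ^ 2 - x = (s - 1) * x + A ^ 2 ≤ (s - 1) * (A + K) + A ^ 2 = K ^ 2`,
which places `x` below the root `y` of `t ^ 2 = t + K ^ 2`.
-/

lemma sq_eq_mul_add_of_one_eq_div_add_div {t a b : ℝ} (ht : t ≠ 0)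
    (h : 1 = a / t + b / t ^ 2) : t ^ 2 = a * t + b := by
  field_simp at h
  linarith

section QuadraticRoot

variable {a b y z : ℝ}

lemma le_of_sq_le_of_sq_eq (hb : 0 ≤ b) (hy : 0 < y) (hy2 : y ^ 2 = a * y + b)
    (hz2 : z ^ 2 ≤ a * z + b) : z ≤ y := by
  by_contra! hyz
  have hay : a ≤ y := by nlinarith
  nlinarith

lemma le_of_sq_eq_of_le_sq (hb : 0 ≤ b) (hy : 0 < y) (hz : 0 < z) (hy2 : y ^ 2 = a * y + b)
    (hz2 : a * z + b ≤ z ^ 2) : y ≤ z := by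
  by_contra! hzy
  have hay : a ≤ y := by nlinarith
  nlinarith

end QuadraticRoot

lemma sq_le_add_sq_of_sq_eq_mul_add_sq {s A x : ℝ} (hs : 1 ≤ s) (hA : 1 ≤ A) (hx : 0 < x)
    (hx2 : x ^ 2 = s * x + A ^ 2) : x ^ 2 ≤ x + (A + s - 1) ^ 2 := by
  have hx_le : x ≤ 2 * A + s - 1 :=
    le_of_sq_eq_of_le_sq (sq_nonneg A) hx (by linarith) hx2 (by nlinarith)
  nlinarith [mul_le_mul_of_nonneg_left hx_le (by linarith : (0 : ℝ) ≤ s - 1)]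

theorem stmt_11_general (l s : ℕ) (hs1 : 1 ≤ s) (hs2 : s ≤ l - 2)
    (x y : ℝ) (hx : 1 < x) (hy : 1 < y)
    (hrx : 1 = (s : ℝ) / x + (((l - 1 - s) ^ 2 : ℕ) : ℝ) / x ^ 2)
    (hry : 1 = 1 / y + (((l - 2) ^ 2 : ℕ) : ℝ) / y ^ 2) :
    x ≤ y := by
  have hA : (1 : ℝ) ≤ ((l - 1 - s : ℕ) : ℝ) := by exact_mod_cast (by omega : 1 ≤ l - 1 - s)
  have hK : ((l - 2 : ℕ) : ℝ) = ((l - 1 - s : ℕ) : ℝ) + s - 1 := by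
    rw [eq_sub_iff_add_eq]
    exact_mod_cast (by omega : l - 2 + 1 = l - 1 - s + s)
  have hx2 := sq_eq_mul_add_of_one_eq_div_add_div (by positivity) hrx
  have hy2 := sq_eq_mul_add_of_one_eq_div_add_div (by positivity) hry
  rw [Nat.cast_pow] at hx2 hy2
  rw [hK] at hy2
  refine le_of_sq_le_of_sq_eq (sq_nonneg _) (by linarith) hy2 ?_
  simpa only [one_mul] using
    sq_le_add_sq_of_sq_eq_mul_add_sq (by exact_mod_cast hs1) hA (by linarith) hx2

/-- Among the branching vectors `V_s` (with `s` entries equal to 1 and `(l-1-s)^2`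
entries equal to 2), for `1 ≤ s ≤ l - 2` and fixed `l ≥ 3`, the vector `V_1` has the
largest branching number: if `x > 1` is the root for `V_s` and `y > 1` is the root for
`V_1`, then `x ≤ y`. -/
theorem stmt_11 (l s : ℕ) (hl : 3 ≤ l) (hs1 : 1 ≤ s) (hs2 : s ≤ l - 2)
    (x y : ℝ) (hx : 1 < x) (hy : 1 < y)
    (hrx : 1 = (s : ℝ) / x + (((l - 1 - s) ^ 2 : ℕ) : ℝ) / x ^ 2)
    (hry : 1 = 1 / y + (((l - 2) ^ 2 : ℕ) : ℝ) / y ^ 2) :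
    x ≤ y :=
  stmt_11_general l s hs1 hs2 x y hx hy hrx hry
end

section
/- The branching vector (1, 3, 4, 4, 4, 4, 3, 3, 3, 3, 3, 4, 4, 4, 4, 3, 4, 4, 4, 4, 3, 4, 4, 4, 4, 3, 4, 4, 4, 4) has branching number less than 2.897; i.e., the unique real root x > 1 of 1 = x^{−1} + 7·x^{−3} + 21·x^{−4} is less than 2.897. -/
open Set

theorem StrictAntiOn.existsUnique_mem_Ioo_eq {f : ℝ → ℝ} {a b y : ℝ} (hab : a ≤ b)
    (hcont : ContinuousOn f (Icc a b)) (hanti : StrictAntiOn f (Ici a))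
    (hya : y < f a) (hyb : f b < y) :
    ∃ x, a < x ∧ f x = y ∧ x < b ∧ ∀ z, a < z → f z = y → z = x := by
  obtain ⟨x, ⟨hax, hxb⟩, hfx⟩ := intermediate_value_Ioo' hab hcont ⟨hyb, hya⟩
  refine ⟨x, hax, hfx, hxb, fun z haz hfz => ?_⟩
  exact hanti.injOn (mem_Ici.2 haz.le) (mem_Ici.2 hax.le) (hfz.trans hfx.symm)

theorem strictAntiOn_div_pow {c : ℝ} (hc : 0 < c) {n : ℕ} (hn : n ≠ 0) :
    StrictAntiOn (fun x : ℝ => c / x ^ n) (Ioi 0) := fun _ ha _ _ hab =>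
  div_lt_div_of_pos_left hc (pow_pos ha n) (pow_lt_pow_left₀ hab ha.le hn)

/-- The branching vector with one entry 1, seven entries 3 and twenty-one entries 4
has branching number less than `2.897`: the unique real root greater than 1 of
`1 = x⁻¹ + 7·x⁻³ + 21·x⁻⁴` is less than `2.897`. -/
theorem stmt_12 :
    ∃ x : ℝ, 1 < x ∧ 1 = 1 / x + 7 / x ^ 3 + 21 / x ^ 4 ∧ x < 2.897 ∧
      ∀ y : ℝ, 1 < y → 1 = 1 / y + 7 / y ^ 3 + 21 / y ^ 4 → y = x := by
  set f : ℝ → ℝ := fun x => 1 / x ^ 1 + 7 / x ^ 3 + 21 / x ^ 4 with hf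
  have hanti : StrictAntiOn f (Ioi 0) :=
    ((strictAntiOn_div_pow one_pos one_ne_zero).add (strictAntiOn_div_pow (by norm_num)
      (by norm_num))).add (strictAntiOn_div_pow (by norm_num) (by norm_num))
  have hcont : ContinuousOn f (Icc 1 2.897) := by
    fun_prop (disch := intro x hx; exact pow_ne_zero _ (by linarith [hx.1]))
  obtain ⟨x, hx1, hfx, hxb, huniq⟩ := hanti.mono (Ici_subset_Ioi.2 one_pos)
    |>.existsUnique_mem_Ioo_eq (y := 1) (by norm_num) hcont (by norm_num [hf]) (by norm_num [hf])
  simp only [hf, pow_one] at hfx huniq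
  exact ⟨x, hx1, hfx.symm, hxb, fun y hy1 hy => huniq y hy1 hy.symm⟩
end

section
/- Let G be a graph, v a vertex, l ≥ 2, and let S be an l-path vertex cover of G with v ∈ S. Let X be any v-hitting set. Then S' = (S \ {v}) ∪ X is also an l-path vertex cover of G. -/
variable {V : Type*} [Fintype V] [DecidableEq V]

theorem IsLPVC.mem_of_forall_notMem_erase {G : SimpleGraph V} {l : ℕ} {S : Finset V}
    (hS : IsLPVC G l S) (v : V) {L : List V} (hL : IsLPathL G l L)
    (havoid : ∀ x ∈ L, x ∉ S.erase v) : v ∈ L := by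
  by_contra hvL
  exact hS ⟨L, hL, fun x hx hxS =>
    havoid x hx (Finset.mem_erase.mpr ⟨ne_of_mem_of_not_mem hx hvL, hxS⟩)⟩

theorem stmt_15_general (G : SimpleGraph V) (l : ℕ) (v : V) (S X : Finset V)
    (hS : IsLPVC G l S) (hX : IsVHit G l v X) :
    IsLPVC G l (S.erase v ∪ X) := by
  rintro ⟨L, hL, havoid⟩
  have hvL : v ∈ L :=
    hS.mem_of_forall_notMem_erase v hL fun x hx hxS => havoid x hx (Finset.mem_union_left X hxS)
  obtain ⟨x, hxX, hxL⟩ := hX.2.2 L ⟨hL, hvL⟩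
  exact havoid x hxL (Finset.mem_union_right _ hxX)

theorem stmt_15 (G : SimpleGraph V) (l : ℕ) (v : V) (S X : Finset V)
    (hl : 2 ≤ l) (hS : IsLPVC G l S) (hv : v ∈ S) (hX : IsVHit G l v X) :
    IsLPVC G l (S.erase v ∪ X) :=
  stmt_15_general G l v S X hS hX
end

section
/- Let G be a graph and v a vertex such that G_v − v contains no l-path (where G_v is the component of v). Then (G, k) has an l-path vertex cover of size at most k if and only if (G − C_v, k − 1) has an l-path vertex cover of size at most k − 1, provided G_v contains at least one l-path. -/
/-! Every cover of `G` must hit an `l`-path of `G_v`, hence contains a vertex of `C_v`; dropping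
the vertices of `C_v` leaves a cover of `G - C_v` that is at least one smaller. Conversely, an
`l`-path lies in a single component, so adding `v` to a cover of `G - C_v` kills every `l`-path:
those outside `C_v` by the cover, those inside `C_v` because `G_v - v` has none. -/

variable {V : Type*} [Fintype V] [DecidableEq V]

/-- `S` is an `l`-path vertex cover of the subgraph of `G` induced by the vertex set
`A`: there is no `l`-path of `G` whose vertices all lie in `A` and avoid `S`. -/
def IsLPVCOn (G : SimpleGraph V) (l : ℕ) (A : Set V) (S : Finset V) : Prop :=
  ¬ ∃ L, IsLPathL G l L ∧ ∀ x ∈ L, x ∈ A ∧ x ∉ S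

theorem List.IsChain.reachable_of_mem {W : Type*} {G : SimpleGraph W} {L : List W}
    (hL : L.IsChain G.Adj) {x y : W} (hx : x ∈ L) (hy : y ∈ L) : G.Reachable x y := by
  have hne : L ≠ [] := List.ne_nil_of_mem hx
  have hhead : ∀ z ∈ L, G.Reachable (L.head hne) z :=
    hL.induction _ _ (fun _ _ hadj hr => hr.trans hadj.reachable) (fun _ => .refl _)
  exact (hhead x hx).symm.trans (hhead y hy)

omit [Fintype V] in
theorem IsLPVC.exists_mem_inter {G : SimpleGraph V} {l : ℕ} {S : Finset V} (hS : IsLPVC G l S)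
    {L : List V} (hL : IsLPathL G l L) : ∃ x ∈ L, x ∈ S := by
  by_contra! hL_avoid
  exact hS ⟨L, hL, hL_avoid⟩

omit [Fintype V] [DecidableEq V] in
theorem IsLPVC.isLPVCOn_filter {G : SimpleGraph V} {l : ℕ} {S : Finset V} (hS : IsLPVC G l S)
    (A : Set V) [DecidablePred (· ∈ A)] : IsLPVCOn G l A (S.filter (· ∈ A)) := by
  rintro ⟨L, hL, hLA⟩
  refine hS ⟨L, hL, fun x hx hxS => ?_⟩
  exact (hLA x hx).2 (Finset.mem_filter.mpr ⟨hxS, (hLA x hx).1⟩)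

theorem IsLPVCOn.isLPVC_insert {G : SimpleGraph V} {l : ℕ} {v : V} {S : Finset V}
    (hS : IsLPVCOn G l {x | ¬ G.Reachable v x} S)
    (hGvv : ¬ ∃ L : List V, IsLPathL G l L ∧ ∀ x ∈ L, G.Reachable v x ∧ x ≠ v) :
    IsLPVC G l (insert v S) := by
  rintro ⟨L, hL, hL_avoid⟩
  by_cases hmeets : ∃ x ∈ L, G.Reachable v x
  · obtain ⟨x₀, hx₀, hvx₀⟩ := hmeets
    refine hGvv ⟨L, hL, fun x hx => ⟨hvx₀.trans (hL.1.1.reachable_of_mem hx₀ hx), ?_⟩⟩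
    rintro rfl
    exact hL_avoid x hx (Finset.mem_insert_self x S)
  · push Not at hmeets
    exact hS ⟨L, hL, fun x hx =>
      ⟨hmeets x hx, fun hxS => hL_avoid x hx (Finset.mem_insert_of_mem hxS)⟩⟩

theorem stmt_17_general (G : SimpleGraph V) (l k : ℕ) (v : V)
    (hk : 1 ≤ k)
    (hGv : ∃ L : List V, IsLPathL G l L ∧ ∀ x ∈ L, G.Reachable v x)
    (hGvv : ¬ ∃ L : List V, IsLPathL G l L ∧ ∀ x ∈ L, G.Reachable v x ∧ x ≠ v) :
    (∃ S : Finset V, IsLPVC G l S ∧ S.card ≤ k) ↔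
      (∃ S : Finset V, IsLPVCOn G l {x | ¬ G.Reachable v x} S ∧ S.card ≤ k - 1) := by
  classical
  constructor
  · rintro ⟨S, hS, hcard⟩
    obtain ⟨L, hL, hL_reach⟩ := hGv
    obtain ⟨w, hwL, hwS⟩ := hS.exists_mem_inter hL
    have hlt : (S.filter (· ∈ {x | ¬ G.Reachable v x})).card < S.card :=
      Finset.card_lt_card (Finset.filter_ssubset.mpr ⟨w, hwS, not_not.mpr (hL_reach w hwL)⟩)
    exact ⟨_, hS.isLPVCOn_filter _, by omega⟩
  · rintro ⟨S, hS, hcard⟩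
    refine ⟨insert v S, hS.isLPVC_insert hGvv, ?_⟩
    calc (insert v S).card ≤ S.card + 1 := Finset.card_insert_le v S
      _ ≤ k := by omega

theorem stmt_17 (G : SimpleGraph V) (l k : ℕ) (v : V)
    (hl : 2 ≤ l) (hk : 1 ≤ k)
    (hGv : ∃ L : List V, IsLPathL G l L ∧ ∀ x ∈ L, G.Reachable v x)
    (hGvv : ¬ ∃ L : List V, IsLPathL G l L ∧ ∀ x ∈ L, G.Reachable v x ∧ x ≠ v) :
    (∃ S : Finset V, IsLPVC G l S ∧ S.card ≤ k) ↔
      (∃ S : Finset V, IsLPVCOn G l {x | ¬ G.Reachable v x} S ∧ S.card ≤ k - 1) :=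
  stmt_17_general G l k v hk hGv hGvv
end
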